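/- arXiv:1611.03943 — 2 statements merged into one kernel-verified Lean document; each statement's English description precedes it below -/
import Mathlib

section
/- Let G = Z_2^n (n ≥ 3) with β(e_i,e_j) = −1 for i≠j and 1 for i=j. Then R^− = {e_i + e_j : 1 ≤ i < j ≤ n} is a skew root system of Lie type in (G_1, β|_{G_1}), where G_1 ≅ Z_2^{n−1} is the subgroup generated by R^−. Moreover β(e_i+e_j, e_s+e_t) = −1 if and only if |{i,j} ∩ {s,t}| = 1, the graph of R^− is connected (so R^− is indecomposable), and the Lie algebra L(R^−) is isomorphic to so_n(F). -/
attribute [local instance 100] LieRing.ofAssociativeRing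

/-- `R` is a skew root system of Lie type in `(G, β)` (relative to the subgroup
generated by `R`, nothing outside it matters for the axioms below). -/
def IsSkewRootLie {G : Type*} [AddCommGroup G] {F : Type*} [Field F]
    (β : G → G → Fˣ) (R : Set G) : Prop :=
  (∀ a ∈ R, ∃ h : G, β a h ≠ 1) ∧ AddSubgroup.closure R = ⊤ ∧
  (∀ a ∈ R, -a ∈ R) ∧ ∀ a ∈ R, ∀ b ∈ R, β a b ≠ 1 → a + b ∈ R

/-!
Identify the vector `e_i + e_j` of `(ZMod 2)ⁿ` with the pair `{i, j}` through its support. Sums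
of such vectors become symmetric differences of pairs, and `β(e_i + e_j, e_s + e_t)` becomes
`(-1) ^ |{i, j} ∩ {s, t}|`; the root system axioms and the connectivity of the graph of `R⁻` turn
into statements about pairs of indices. The roots generate the kernel of the coordinate sum,
a subgroup of index two.

For the Lie algebra, the elements `v_i = u(e_i)` satisfy the Clifford relations
`v_i v_j + v_j v_i = 2 δ_ij`, and `u(e_i + e_j) = v_i v_j` for `i < j`. Hence `ad (v_i v_j)`
preserves `V = span {v_k}` and acts on it by the matrix `2 (E_ij - E_ji)`. Since `ad` is a
representation, its matrix in the basis `v` is a Lie algebra map `L → soₙ`, and the linear map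
`X ↦ ¼ ∑ X_ij v_i v_j` is its inverse.
-/

section

open Finset Matrix

section CharVec

variable {ι : Type*} [DecidableEq ι]

def charVec (S : Finset ι) : ι → ZMod 2 := fun k => if k ∈ S then 1 else 0

variable (ι) in
def pairVectors : Set (ι → ZMod 2) := charVec '' {S | #S = 2}

theorem charVec_add (S T : Finset ι) : charVec S + charVec T = charVec (symmDiff S T) := by
  ext k
  by_cases hS : k ∈ S <;> by_cases hT : k ∈ T <;> simp [charVec, mem_symmDiff, hS, hT]
  decide

theorem single_add_single_eq_charVec {i j : ι} (hij : i ≠ j) :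
    Pi.single i 1 + Pi.single j 1 = charVec {i, j} := by
  ext k
  by_cases hi : k = i <;> by_cases hj : k = j <;> simp_all [charVec]

theorem single_one_injective : Function.Injective fun k : ι => (Pi.single k 1 : ι → ZMod 2) := by
  intro i j h
  by_contra hij
  simpa [hij] using congrFun h i

theorem setOf_single_add_single_eq_pairVectors [LinearOrder ι] :
    {g | ∃ i j : ι, i < j ∧ g = Pi.single i 1 + Pi.single j 1} = pairVectors ι := by
  ext g
  constructor
  · rintro ⟨i, j, hij, rfl⟩
    exact ⟨{i, j}, card_pair hij.ne, (single_add_single_eq_charVec hij.ne).symm⟩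
  · rintro ⟨S, hS, rfl⟩
    obtain ⟨i, j, hij, rfl⟩ := card_eq_two.mp hS
    rcases hij.lt_or_gt with h | h
    · exact ⟨i, j, h, (single_add_single_eq_charVec hij).symm⟩
    · exact ⟨j, i, h, by rw [pair_comm, single_add_single_eq_charVec h.ne]⟩

theorem sum_charVec [Fintype ι] (S : Finset ι) : ∑ k, charVec S k = #S := by
  simp [charVec]

theorem sum_charVec_mul_charVec [Fintype ι] (S T : Finset ι) :
    ∑ k, charVec S k * charVec T k = #(S ∩ T) := by
  simp [charVec, ← ite_and, and_comm, ← mem_inter]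

theorem card_symmDiff_add (S T : Finset ι) : #(symmDiff S T) + 2 * #(S ∩ T) = #S + #T := by
  rw [symmDiff_def, sup_eq_union, card_union_of_disjoint disjoint_sdiff_sdiff, card_sdiff,
    card_sdiff, inter_comm T S]
  have := card_le_card (inter_subset_left (s₁ := S) (s₂ := T))
  have := card_le_card (inter_subset_right (s₁ := S) (s₂ := T))
  omega

theorem card_inter_insert_eq_one {S : Finset ι} {i k : ι} (hi : i ∈ S) (hk : k ∉ S) :
    #(S ∩ {i, k}) = 1 := by
  rw [inter_insert_of_mem hi, inter_singleton_of_notMem hk, insert_empty, card_singleton]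

theorem card_inter_eq_one_iff_odd {S T : Finset ι} (hS : #S = 2) :
    #(S ∩ T) = 1 ↔ Odd #(S ∩ T) := by
  have : #(S ∩ T) ≤ 2 := hS ▸ card_le_card inter_subset_left
  interval_cases #(S ∩ T) <;> decide

theorem reflTransGen_card_inter_eq_one {S T : Finset ι} (hS : #S = 2) (hT : #T = 2) :
    Relation.ReflTransGen (fun S T => #S = 2 ∧ #T = 2 ∧ #(S ∩ T) = 1) S T := by
  by_cases hST : S = T
  · rw [hST]
  by_cases h1 : #(S ∩ T) = 1
  · exact .single ⟨hS, hT, h1⟩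
  have hdisj : Disjoint S T := by
    have hle : #(S ∩ T) ≤ 2 := hS ▸ card_le_card inter_subset_left
    have h2 : #(S ∩ T) ≠ 2 := fun h => hST <| eq_of_subset_of_card_le
      (inter_eq_left.mp (eq_of_subset_of_card_le inter_subset_left (hS ▸ h.ge))) (by omega)
    exact disjoint_iff_inter_eq_empty.mpr (card_eq_zero.mp (by omega))
  obtain ⟨i, hi⟩ := card_pos.mp (hS ▸ two_pos)
  obtain ⟨s, hs⟩ := card_pos.mp (hT ▸ two_pos)
  have hiT : i ∉ T := disjoint_left.mp hdisj hi
  have hsS : s ∉ S := disjoint_right.mp hdisj hs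
  have hU : #{i, s} = 2 := card_pair fun h => hiT (h ▸ hs)
  refine .head ⟨hS, hU, card_inter_insert_eq_one hi hsS⟩ (.single ⟨hU, hT, ?_⟩)
  rw [inter_comm, pair_comm, card_inter_insert_eq_one hs hiT]

end CharVec

section CoordSum

variable {ι : Type*} [Fintype ι] [DecidableEq ι]

def coordSum : (ι → ZMod 2) →+ ZMod 2 :=
  AddMonoidHom.mk' (fun g => ∑ i, g i) fun _ _ => sum_add_distrib

theorem closure_pairVectors_eq_ker [Nonempty ι] :
    AddSubgroup.closure (pairVectors ι) = coordSum.ker := by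
  apply le_antisymm
  · rw [AddSubgroup.closure_le]
    rintro _ ⟨S, hS : #S = 2, rfl⟩
    change ∑ k, charVec S k = 0
    rw [sum_charVec, hS]
    rfl
  · intro g hg
    obtain ⟨i₀⟩ := ‹Nonempty ι›
    have hpair (k : ι) : Pi.single k 1 + Pi.single i₀ 1 ∈ AddSubgroup.closure (pairVectors ι) := by
      by_cases hk : k = i₀
      · rw [hk, ZModModule.add_self]
        exact zero_mem _
      · exact AddSubgroup.subset_closure
          ⟨{k, i₀}, card_pair hk, (single_add_single_eq_charVec hk).symm⟩
    -- the coordinates of `g` add up to zero, so the copies of `e i₀` cancel out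
    have hg_eq : g = ∑ k, g k • (Pi.single k (1 : ZMod 2) + Pi.single i₀ 1) := by
      have hg' : ∑ k, g k = 0 := hg
      simp [smul_add, sum_add_distrib, ← sum_smul, hg', ← pi_eq_sum_univ' g]
    rw [hg_eq]
    let H := AddSubgroup.toZModSubmodule 2 (AddSubgroup.closure (pairVectors ι))
    exact H.sum_mem fun k _ => H.smul_mem (g k) (hpair k)

theorem card_ker_coordSum [Nonempty ι] :
    Nat.card (coordSum : (ι → ZMod 2) →+ ZMod 2).ker = 2 ^ (Fintype.card ι - 1) := by
  obtain ⟨i₀⟩ := ‹Nonempty ι›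
  have hsurj : Function.Surjective (coordSum : (ι → ZMod 2) →+ ZMod 2) :=
    fun c => ⟨Pi.single i₀ c, by simp [coordSum]⟩
  have h := AddSubgroup.card_mul_index (coordSum : (ι → ZMod 2) →+ ZMod 2).ker
  rw [AddSubgroup.index_ker, AddMonoidHom.range_eq_top.mpr hsurj, AddSubgroup.card_top,
    Nat.card_zmod, Nat.card_fun, Nat.card_zmod, Nat.card_eq_fintype_card (α := ι)] at h
  rw [← Nat.mul_left_inj two_ne_zero, h, ← pow_succ, Nat.sub_add_cancel Fintype.card_pos]

end CoordSum

section SkewForm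

variable (F : Type*) [Field F] {ι : Type*} [Fintype ι] [DecidableEq ι]

def skewForm (a b : ι → ZMod 2) : Fˣ :=
  (-1) ^ ((∑ i, a i) * (∑ i, b i) - ∑ i, a i * b i : ZMod 2).val

variable {F}

theorem skewForm_charVec {S T : Finset ι} (hS : #S = 2) (hT : #T = 2) :
    skewForm F (charVec S) (charVec T) = (-1) ^ #(S ∩ T) := by
  rw [skewForm, sum_charVec, sum_charVec, sum_charVec_mul_charVec, hS, hT]
  have h2 : ((2 : ℕ) : ZMod 2) = 0 := rfl
  rw [h2, zero_mul, zero_sub, ZMod.neg_eq_self_mod_two, ZMod.val_natCast]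
  exact neg_one_pow_congr (by simp [Nat.even_iff])

theorem units_neg_one_ne_one [NeZero (2 : F)] : (-1 : Fˣ) ≠ 1 := by
  intro h
  have h' : (-1 : F) = 1 := by simpa using congrArg Units.val h
  exact two_ne_zero (by linear_combination -h' : (2 : F) = 0)

variable [NeZero (2 : F)]

theorem skewForm_charVec_eq_neg_one_iff {S T : Finset ι} (hS : #S = 2) (hT : #T = 2) :
    skewForm F (charVec S) (charVec T) = -1 ↔ #(S ∩ T) = 1 := by
  rw [skewForm_charVec hS hT, neg_one_pow_eq_neg_one_iff_odd units_neg_one_ne_one,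
    card_inter_eq_one_iff_odd hS]

theorem skewForm_charVec_ne_one_iff {S T : Finset ι} (hS : #S = 2) (hT : #T = 2) :
    skewForm F (charVec S) (charVec T) ≠ 1 ↔ #(S ∩ T) = 1 := by
  rw [skewForm_charVec hS hT, Ne, neg_one_pow_eq_one_iff_even units_neg_one_ne_one,
    Nat.not_even_iff_odd, card_inter_eq_one_iff_odd hS]

theorem exists_skewForm_ne_one (hι : 2 < Fintype.card ι) :
    ∀ a ∈ pairVectors ι, ∃ b ∈ pairVectors ι, skewForm F a b ≠ 1 := by
  rintro _ ⟨S, hS : #S = 2, rfl⟩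
  obtain ⟨k, -, hk⟩ := exists_mem_notMem_of_card_lt_card (s := S) (t := univ)
    (by rwa [hS, card_univ])
  obtain ⟨i, hi⟩ := card_pos.mp (hS ▸ two_pos)
  have hT : #{i, k} = 2 := card_pair fun h => hk (h ▸ hi)
  exact ⟨_, ⟨_, hT, rfl⟩,
    (skewForm_charVec_ne_one_iff hS hT).mpr (card_inter_insert_eq_one hi hk)⟩

theorem add_mem_pairVectors_of_skewForm_ne_one :
    ∀ a ∈ pairVectors ι, ∀ b ∈ pairVectors ι, skewForm F a b ≠ 1 → a + b ∈ pairVectors ι := by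
  rintro _ ⟨S, hS : #S = 2, rfl⟩ _ ⟨T, hT : #T = 2, rfl⟩ h
  have h1 := (skewForm_charVec_ne_one_iff hS hT).mp h
  have := card_symmDiff_add S T
  exact ⟨symmDiff S T, by change #(symmDiff S T) = 2; omega, (charVec_add S T).symm⟩

theorem reflTransGen_skewForm_ne_one :
    ∀ a ∈ pairVectors ι, ∀ b ∈ pairVectors ι, Relation.ReflTransGen
      (fun x y => x ∈ pairVectors ι ∧ y ∈ pairVectors ι ∧ skewForm F x y ≠ 1) a b := by
  rintro _ ⟨S, hS : #S = 2, rfl⟩ _ ⟨T, hT : #T = 2, rfl⟩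
  refine (reflTransGen_card_inter_eq_one hS hT).lift charVec fun S T ⟨hS, hT, h⟩ => ?_
  exact ⟨⟨S, hS, rfl⟩, ⟨T, hT, rfl⟩, (skewForm_charVec_ne_one_iff hS hT).mpr h⟩

end SkewForm

section TwistCocycle

variable (F : Type*) [Field F] {ι : Type*} [Fintype ι] [LinearOrder ι]

def twistCocycle (a b : ι → ZMod 2) : Fˣ :=
  (-1) ^ ∑ i, ∑ j, if j < i then (a i).val * (b j).val else 0

theorem twistCocycle_single_single (a b : ι) :
    twistCocycle F (Pi.single a 1) (Pi.single b 1) = if b < a then -1 else 1 := by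
  rw [twistCocycle, sum_eq_single a (fun i _ hi => by simp [hi]) (by simp),
    sum_eq_single b (fun j _ hj => by simp [hj]) (by simp)]
  split_ifs <;> simp [ZMod.val_one]

variable {F} {A : Type*} [Ring A] [Algebra F A] {u : (ι → ZMod 2) → A}
  (hmul : ∀ a b, u a * u b = (twistCocycle F a b : F) • u (a + b))
include hmul

theorem mul_single_of_lt {a b : ι} (hab : a < b) :
    u (Pi.single a 1) * u (Pi.single b 1) = u (Pi.single a 1 + Pi.single b 1) := by
  rw [hmul, twistCocycle_single_single, if_neg hab.not_gt, Units.val_one, one_smul]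

theorem image_setOf_single_add_single :
    u '' {g | ∃ i j : ι, i < j ∧ g = Pi.single i 1 + Pi.single j 1} =
      {x | ∃ i j, i < j ∧ x = u (Pi.single i 1) * u (Pi.single j 1)} := by
  ext x
  constructor
  · rintro ⟨_, ⟨i, j, hij, rfl⟩, rfl⟩
    exact ⟨i, j, hij, (mul_single_of_lt hmul hij).symm⟩
  · rintro ⟨i, j, hij, rfl⟩
    exact ⟨_, ⟨i, j, hij, rfl⟩, (mul_single_of_lt hmul hij).symm⟩

theorem single_anticomm (hone : u 0 = 1) (a b : ι) :
    u (Pi.single a 1) * u (Pi.single b 1) + u (Pi.single b 1) * u (Pi.single a 1) =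
      if a = b then 2 else 0 := by
  rw [hmul, hmul, twistCocycle_single_single, twistCocycle_single_single, add_comm (Pi.single b 1)]
  rcases lt_trichotomy a b with h | rfl | h
  · simp [h, h.ne, h.not_gt]
  · simp [ZModModule.add_self, hone, one_add_one_eq_two]
  · simp [h, h.ne', h.not_gt]

end TwistCocycle

section Clifford

variable {F A ι : Type*} [Field F] [Ring A] [Algebra F A] {v : ι → A}

theorem lie_mul_mul_of_anticomm [DecidableEq ι]
    (hanti : ∀ a b, v a * v b + v b * v a = if a = b then 2 else 0) (i j k : ι) :
    ⁅v i * v j, v k⁆ =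
      (if j = k then (2 : F) • v i else 0) - if i = k then (2 : F) • v j else 0 := by
  have key : ⁅v i * v j, v k⁆ = v i * (v j * v k + v k * v j) - (v i * v k + v k * v i) * v j := by
    rw [Ring.lie_def]
    noncomm_ring
  rw [key, hanti, hanti]
  split_ifs <;> simp [two_smul, mul_two, two_mul]

variable [Fintype ι]

variable (v) in
noncomputable def bivector : Matrix ι ι F →ₗ[F] A where
  toFun X := (4 : F)⁻¹ • ∑ i, ∑ j, X i j • (v i * v j)
  map_add' X Y := by simp [add_smul, sum_add_distrib]
  map_smul' c X := by simp [smul_sum, smul_smul, mul_left_comm]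

theorem bivector_apply (X : Matrix ι ι F) :
    bivector v X = (4 : F)⁻¹ • ∑ i, ∑ j, X i j • (v i * v j) := rfl

theorem four_ne_zero_of_two [NeZero (2 : F)] : (4 : F) ≠ 0 := by
  rw [show (4 : F) = 2 * 2 by norm_num]
  exact mul_ne_zero two_ne_zero two_ne_zero

variable [DecidableEq ι] [NeZero (2 : F)]
  (hanti : ∀ a b, v a * v b + v b * v a = if a = b then 2 else 0)
include hanti

theorem lie_bivector {X : Matrix ι ι F} (hX : Xᵀ = -X) (l : ι) :
    ⁅bivector v X, v l⁆ = ∑ k, X k l • v k := by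
  have hX' (a b : ι) : X a b = -X b a := by simpa using congrFun (congrFun hX b) a
  simp only [bivector_apply, smul_lie, sum_lie, lie_mul_mul_of_anticomm (F := F) hanti]
  simp only [smul_sub, smul_ite, smul_smul, smul_zero, sum_sub_distrib, sum_ite_eq', mem_univ,
    ↓reduceIte, sum_ite_irrel, sum_const_zero, hX' l, neg_mul, neg_smul, sum_neg_distrib,
    sub_neg_eq_add, smul_add]
  rw [← add_smul, smul_sum]
  refine sum_congr rfl fun k _ => ?_
  rw [smul_smul]
  congr 1
  linear_combination X k l * inv_mul_cancel₀ (four_ne_zero_of_two (F := F))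

theorem bivector_single {i j : ι} (hij : i ≠ j) :
    bivector v ((2 : F) • (Matrix.single i j (1 : F) - Matrix.single j i 1)) = v i * v j := by
  have hji : v j * v i = -(v i * v j) := by
    simpa [hij, add_eq_zero_iff_eq_neg'] using hanti i j
  have h4 : (4 : F)⁻¹ * (2 + 2) = 1 := by
    rw [two_add_two_eq_four, inv_mul_cancel₀ four_ne_zero_of_two]
  simp [bivector_apply, Matrix.single_apply, ite_and, smul_sub, sub_smul, sum_sub_distrib, hji,
    smul_smul, ← add_smul, h4]

end Clifford

section AdjointAction

variable {F A ι : Type*} [Field F] [Ring A] [Algebra F A] [Fintype ι] [DecidableEq ι]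
  {v : ι → A} (L : LieSubalgebra F A)

def spanLieSubmodule (hL : ∀ x ∈ L, ∀ k, ⁅x, v k⁆ ∈ Submodule.span F (Set.range v)) :
    LieSubmodule F L A where
  toSubmodule := Submodule.span F (Set.range v)
  lie_mem {x m} hm := by
    change m ∈ Submodule.span F (Set.range v) at hm
    change ⁅x, m⁆ ∈ Submodule.span F (Set.range v)
    induction hm using Submodule.span_induction with
    | mem m hm => obtain ⟨k, rfl⟩ := hm; exact hL x x.2 k
    | zero => simp
    | add m m' _ _ h h' => rw [lie_add]; exact add_mem h h'
    | smul c m _ h => rw [lie_smul]; exact Submodule.smul_mem _ c h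

variable (hv : LinearIndependent F v)
  (hL : ∀ x ∈ L, ∀ k, ⁅x, v k⁆ ∈ Submodule.span F (Set.range v))

noncomputable def adMatrix : L →ₗ⁅F⁆ Matrix ι ι F :=
  (LinearMap.toMatrixAlgEquiv (Module.Basis.span hv : Module.Basis ι F (spanLieSubmodule L hL))
    ).toLieEquiv.toLieHom.comp (LieModule.toEnd F L (spanLieSubmodule L hL))

variable {L hv hL} in
theorem adMatrix_eq {x : L} {Y : Matrix ι ι F} (h : ∀ l, ⁅(x : A), v l⁆ = ∑ k, Y k l • v k) :
    adMatrix L hv hL x = Y := by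
  let b : Module.Basis ι F (spanLieSubmodule L hL) := Module.Basis.span hv
  have hb (k : ι) : (b k : A) = v k := congrArg Subtype.val (Module.Basis.span_apply hv k)
  change LinearMap.toMatrixAlgEquiv b (LieModule.toEnd F L (spanLieSubmodule L hL) x) = Y
  rw [← (LinearMap.toMatrixAlgEquiv b).apply_symm_apply Y]
  congr 1
  refine b.ext fun l => Subtype.ext ?_
  rw [LinearMap.toMatrixAlgEquiv_symm, Matrix.toLinAlgEquiv_self, LieModule.toEnd_apply_apply]
  simp [hb, h]

end AdjointAction

theorem mem_skewAdjointMatricesSubmodule_one_iff {R ι : Type*} [CommRing R] [Fintype ι]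
    [DecidableEq ι] {X : Matrix ι ι R} :
    X ∈ skewAdjointMatricesSubmodule (1 : Matrix ι ι R) ↔ Xᵀ = -X := by
  simp [Matrix.IsSkewAdjoint, Matrix.IsAdjointPair]

section Bivectors

variable {F A ι : Type*} [Field F] [Ring A] [Algebra F A] [LinearOrder ι] {v : ι → A}
  {L : LieSubalgebra F A} (hanti : ∀ a b, v a * v b + v b * v a = if a = b then 2 else 0)
  (hLspan : (L : Submodule F A) = Submodule.span F {x | ∃ i j, i < j ∧ x = v i * v j})
include hanti hLspan

theorem mul_mem_of_ne {i j : ι} (hij : i ≠ j) : v i * v j ∈ L := by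
  have hmem {i j : ι} (h : i < j) : v i * v j ∈ L := by
    rw [← LieSubalgebra.mem_toSubmodule, hLspan]
    exact Submodule.subset_span ⟨i, j, h, rfl⟩
  rcases hij.lt_or_gt with h | h
  · exact hmem h
  · rw [eq_neg_of_add_eq_zero_left ((hanti i j).trans (if_neg hij))]
    exact neg_mem (hmem h)

theorem lie_mem_span_range (x : A) (hx : x ∈ L) (k : ι) :
    ⁅x, v k⁆ ∈ Submodule.span F (Set.range v) := by
  rw [← LieSubalgebra.mem_toSubmodule, hLspan] at hx
  induction hx using Submodule.span_induction with
  | mem x hx =>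
    obtain ⟨i, j, -, rfl⟩ := hx
    have hsmul (c : F) (m : ι) : c • v m ∈ Submodule.span F (Set.range v) :=
      Submodule.smul_mem _ c (Submodule.subset_span (Set.mem_range_self m))
    rw [lie_mul_mul_of_anticomm (F := F) hanti]
    refine sub_mem ?_ ?_ <;> split_ifs <;> simp [hsmul]
  | zero => simp
  | add x y _ _ hx hy => rw [add_lie]; exact add_mem hx hy
  | smul c x _ hx => rw [smul_lie]; exact Submodule.smul_mem _ c hx

variable [Fintype ι] [NeZero (2 : F)]

theorem bivector_mem {X : Matrix ι ι F} (hX : Xᵀ = -X) : bivector v X ∈ L := by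
  refine L.smul_mem _ (L.sum_mem fun i _ => L.sum_mem fun j _ => ?_)
  by_cases hij : i = j
  · subst hij
    have hii : X i i = -X i i := congrFun (congrFun hX i) i
    have : X i i = 0 :=
      (mul_eq_zero.mp (by linear_combination hii : (2 : F) * X i i = 0)).resolve_left two_ne_zero
    simp [this]
  · exact L.smul_mem _ (mul_mem_of_ne hanti hLspan hij)

theorem exists_bivector_eq (x : A) (hx : x ∈ L) :
    ∃ X : Matrix ι ι F, Xᵀ = -X ∧ bivector v X = x := by
  have : (L : Submodule F A) ≤
      (skewAdjointMatricesSubmodule (1 : Matrix ι ι F)).map (bivector v) := by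
    rw [hLspan, Submodule.span_le]
    rintro _ ⟨i, j, hij, rfl⟩
    refine ⟨(2 : F) • (Matrix.single i j (1 : F) - Matrix.single j i 1), ?_,
      bivector_single hanti hij.ne⟩
    rw [SetLike.mem_coe, mem_skewAdjointMatricesSubmodule_one_iff, transpose_smul,
      transpose_sub, transpose_single, transpose_single, ← smul_neg, neg_sub]
  obtain ⟨X, hX, hXx⟩ := this hx
  exact ⟨X, mem_skewAdjointMatricesSubmodule_one_iff.mp hX, hXx⟩

theorem nonempty_lieEquiv_skewAdjointMatrices (hv : LinearIndependent F v) :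
    Nonempty (L ≃ₗ⁅F⁆ skewAdjointMatricesLieSubalgebra (1 : Matrix ι ι F)) := by
  set ψ := adMatrix L hv (lie_mem_span_range hanti hLspan)
  let Θ (X : Matrix ι ι F) (hX : Xᵀ = -X) : L := ⟨bivector v X, bivector_mem hanti hLspan hX⟩
  have hψΘ {X : Matrix ι ι F} (hX : Xᵀ = -X) : ψ (Θ X hX) = X :=
    adMatrix_eq (lie_bivector hanti hX)
  have hΘ (x : L) : ∃ X, ∃ hX : Xᵀ = -X, Θ X hX = x := by
    obtain ⟨X, hX, hXx⟩ := exists_bivector_eq hanti hLspan x x.2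
    exact ⟨X, hX, Subtype.ext hXx⟩
  have hinj : Function.Injective ψ := by
    intro x y hxy
    obtain ⟨X, hX, rfl⟩ := hΘ x
    obtain ⟨Y, hY, rfl⟩ := hΘ y
    rw [hψΘ hX, hψΘ hY] at hxy
    subst hxy
    rfl
  have hrange : (ψ.range : Set (Matrix ι ι F)) =
      skewAdjointMatricesLieSubalgebra (1 : Matrix ι ι F) := by
    ext M
    simp only [SetLike.mem_coe, LieHom.mem_range, mem_skewAdjointMatricesLieSubalgebra,
      mem_skewAdjointMatricesSubmodule_one_iff]
    constructor
    · rintro ⟨x, rfl⟩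
      obtain ⟨X, hX, rfl⟩ := hΘ x
      rwa [hψΘ hX]
    · exact fun hM => ⟨Θ M hM, hψΘ hM⟩
  exact ⟨(LieEquiv.ofInjective ψ hinj).trans (LieEquiv.ofEq _ _ hrange)⟩

end Bivectors

end

theorem skewRootLie_so_n_general
    {F : Type*} [Field F] [CharZero F]
    {A : Type*} [Ring A] [Algebra F A]
    (n : ℕ) (hn : 3 ≤ n)
    (β : (Fin n → ZMod 2) → (Fin n → ZMod 2) → Fˣ)
    (hβ : ∀ a b, β a b =
      (-1 : Fˣ) ^ (((∑ i, a i) * (∑ i, b i) - ∑ i, a i * b i : ZMod 2)).val)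
    (ξ : (Fin n → ZMod 2) → (Fin n → ZMod 2) → Fˣ)
    (hξ : ∀ a b, ξ a b =
      (-1 : Fˣ) ^ (∑ i : Fin n, ∑ j : Fin n, if j < i then (a i).val * (b j).val else 0))
    (u : (Fin n → ZMod 2) → A)
    (hind : LinearIndependent F u) (hone : u 0 = 1)
    (hmul : ∀ a b, u a * u b = (ξ a b : F) • u (a + b))
    (R : Set (Fin n → ZMod 2))
    (hRdefR : R = {g | ∃ i j : Fin n, i < j ∧
        g = Pi.single i (1 : ZMod 2) + Pi.single j (1 : ZMod 2)})
    (L : LieSubalgebra F A)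
    (hL : (L : Submodule F A) = Submodule.span F (u '' R)) :
    (∀ i j s t : Fin n, i ≠ j → s ≠ t →
      (β (Pi.single i 1 + Pi.single j 1) (Pi.single s 1 + Pi.single t 1) = -1 ↔
        (({i, j} ∩ {s, t} : Finset (Fin n)).card = 1))) ∧
    ((∀ a ∈ R, ∃ b ∈ R, β a b ≠ 1) ∧ (∀ a ∈ R, -a ∈ R) ∧
      (∀ a ∈ R, ∀ b ∈ R, β a b ≠ 1 → a + b ∈ R)) ∧
    (∀ a ∈ R, ∀ b ∈ R, Relation.ReflTransGen
        (fun x y => x ∈ R ∧ y ∈ R ∧ β x y ≠ 1) a b) ∧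
    Nat.card (AddSubgroup.closure R) = 2 ^ (n - 1) ∧
    Nonempty (↥L ≃ₗ⁅F⁆
      ↥(skewAdjointMatricesLieSubalgebra (1 : Matrix (Fin n) (Fin n) F))) := by
  obtain rfl : β = skewForm F := funext₂ hβ
  obtain rfl : ξ = twistCocycle F := funext₂ hξ
  have hso : Nonempty (L ≃ₗ⁅F⁆ skewAdjointMatricesLieSubalgebra (1 : Matrix (Fin n) (Fin n) F)) :=
    nonempty_lieEquiv_skewAdjointMatrices (single_anticomm hmul hone)
      (by rw [hL, hRdefR, image_setOf_single_add_single hmul])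
      (hind.comp _ single_one_injective)
  rw [setOf_single_add_single_eq_pairVectors] at hRdefR
  subst hRdefR
  have : Nonempty (Fin n) := ⟨⟨0, by omega⟩⟩
  refine ⟨fun i j s t hij hst => ?_,
    ⟨exists_skewForm_ne_one (by rw [Fintype.card_fin]; omega),
      fun a _ => by rwa [ZModModule.neg_eq_self], add_mem_pairVectors_of_skewForm_ne_one⟩,
    reflTransGen_skewForm_ne_one, ?_, hso⟩
  · rw [single_add_single_eq_charVec hij, single_add_single_eq_charVec hst]
    exact skewForm_charVec_eq_neg_one_iff (Finset.card_pair hij) (Finset.card_pair hst)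
  · rw [closure_pairVectors_eq_ker, card_ker_coordSum, Fintype.card_fin]

/-- Let `G = ℤ₂ⁿ` (`n ≥ 3`) with `β(eᵢ,eⱼ) = -1` for `i ≠ j` and `1` for `i = j`.
Then `R⁻ = {eᵢ + eⱼ : i < j}` is a skew root system of Lie type in `(G₁, β|_{G₁})`, where
`G₁ ≅ ℤ₂^{n-1}` is the subgroup generated by `R⁻` (of cardinality `2^{n-1}`).  Moreover
`β(eᵢ+eⱼ, eₛ+eₜ) = -1` iff `|{i,j} ∩ {s,t}| = 1`, the graph of `R⁻` is connected (so `R⁻`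
is indecomposable), and the Lie algebra `L(R⁻)` (inside the twisted group algebra, i.e.
the Clifford algebra) is isomorphic to `so_n(F)`, the Lie algebra of skew-symmetric
`n × n` matrices. -/
theorem skewRootLie_so_n
    {F : Type*} [Field F] [IsAlgClosed F] [CharZero F]
    {A : Type*} [Ring A] [Algebra F A]
    (n : ℕ) (hn : 3 ≤ n)
    (β : (Fin n → ZMod 2) → (Fin n → ZMod 2) → Fˣ)
    (hβ : ∀ a b, β a b =
      (-1 : Fˣ) ^ (((∑ i, a i) * (∑ i, b i) - ∑ i, a i * b i : ZMod 2)).val)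
    (ξ : (Fin n → ZMod 2) → (Fin n → ZMod 2) → Fˣ)
    (hξ : ∀ a b, ξ a b =
      (-1 : Fˣ) ^ (∑ i : Fin n, ∑ j : Fin n, if j < i then (a i).val * (b j).val else 0))
    (u : (Fin n → ZMod 2) → A)
    (hind : LinearIndependent F u) (hone : u 0 = 1)
    (hmul : ∀ a b, u a * u b = (ξ a b : F) • u (a + b))
    (R : Set (Fin n → ZMod 2))
    (hRdefR : R = {g | ∃ i j : Fin n, i < j ∧
        g = Pi.single i (1 : ZMod 2) + Pi.single j (1 : ZMod 2)})
    (L : LieSubalgebra F A)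
    (hL : (L : Submodule F A) = Submodule.span F (u '' R)) :
    (∀ i j s t : Fin n, i ≠ j → s ≠ t →
      (β (Pi.single i 1 + Pi.single j 1) (Pi.single s 1 + Pi.single t 1) = -1 ↔
        (({i, j} ∩ {s, t} : Finset (Fin n)).card = 1))) ∧
    ((∀ a ∈ R, ∃ b ∈ R, β a b ≠ 1) ∧ (∀ a ∈ R, -a ∈ R) ∧
      (∀ a ∈ R, ∀ b ∈ R, β a b ≠ 1 → a + b ∈ R)) ∧
    (∀ a ∈ R, ∀ b ∈ R, Relation.ReflTransGen
        (fun x y => x ∈ R ∧ y ∈ R ∧ β x y ≠ 1) a b) ∧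
    Nat.card (AddSubgroup.closure R) = 2 ^ (n - 1) ∧
    Nonempty (↥L ≃ₗ⁅F⁆
      ↥(skewAdjointMatricesLieSubalgebra (1 : Matrix (Fin n) (Fin n) F))) :=
  skewRootLie_so_n_general n hn β hβ ξ hξ u hind hone hmul R hRdefR L hL
end

section
/- Let q: F_2^{2k} → F_2 be a quadratic form with polarization β_1(a,b) = q(a+b) − q(a) − q(b), and set β(a,b) = (−1)^{β_1(a,b)} valued in F^×, where G = Z_2^{2k} is identified with F_2^{2k}. (1) If R = {a ∈ G : q(a) = 0} generates G, then R is a skew root system of Jordan type in (G,β). (2) If β is nonsingular and R' = {a ∈ G ∖ {0} : q(a) = 1} generates G, then R' is a skew root system of Lie type in (G,β). -/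
/-- `R` is a skew root system of Jordan type in `(G, β)`. -/
def IsSkewRootJordan {G : Type*} [AddCommGroup G] {F : Type*} [Field F]
    (β : G → G → Fˣ) (R : Set G) : Prop :=
  AddSubgroup.closure R = ⊤ ∧ (∀ a ∈ R, -a ∈ R) ∧
  ∀ a ∈ R, ∀ b ∈ R, β a b ≠ -1 → a + b ∈ R

/-!
Since `q (a + b) = q a + q b + β₁ a b`, the condition `β a b ≠ -1` means `β₁ a b = 0`, so
`q (a + b) = q a + q b` and the zero set of `q` is closed under such sums; dually `β a b ≠ 1`
means `β₁ a b = 1`, so two elements with `q = 1` add up to one with `q = 1`, which is nonzero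
because `q 0 = 0`. Closure under negation is automatic in characteristic two.
-/

section SignCharacter

variable {M : Type*} [Monoid M] [HasDistribNeg M]

theorem neg_one_pow_val_ne_one_iff (h : (-1 : M) ≠ 1) (x : ZMod 2) :
    (-1 : M) ^ x.val ≠ 1 ↔ x = 1 := by
  obtain rfl | rfl : x = 0 ∨ x = 1 := by revert x; decide
  · simp
  · simp [ZMod.val_one, h]

theorem neg_one_pow_val_ne_neg_one_iff (h : (-1 : M) ≠ 1) (x : ZMod 2) :
    (-1 : M) ^ x.val ≠ -1 ↔ x = 0 := by
  obtain rfl | rfl : x = 0 ∨ x = 1 := by revert x; decide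
  · simp [h.symm]
  · simp [ZMod.val_one]

end SignCharacter

theorem Units.neg_one_ne_one_of_charZero (F : Type*) [Field F] [CharZero F] :
    (-1 : Fˣ) ≠ 1 := fun h => by
  norm_num [Units.ext_iff] at h

section PolarForm

variable {G R : Type*} [AddCommGroup G] [AddCommGroup R] {q : G → R} {β₁ : G → G → R}

theorem add_eq_add_add_polar (hβ₁ : ∀ a b, β₁ a b = q (a + b) - q a - q b) (a b : G) :
    q (a + b) = q a + q b + β₁ a b := by
  rw [hβ₁]; abel

theorem map_zero_of_polar_add_left (hβ₁ : ∀ a b, β₁ a b = q (a + b) - q a - q b)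
    (hadd : ∀ a b c, β₁ (a + b) c = β₁ a c + β₁ b c) : q 0 = 0 := by
  have hβ₀ : β₁ 0 0 = 0 := by simpa using hadd 0 0 0
  simpa [hβ₀] using hβ₁ 0 0

end PolarForm

section SkewRootSystems

variable {G F : Type*} [AddCommGroup G] [Module (ZMod 2) G] [Field F]
  {q : G → ZMod 2} {β₁ : G → G → ZMod 2} {β : G → G → Fˣ}

theorem isSkewRootJordan_setOf_eq_zero (hF : (-1 : Fˣ) ≠ 1)
    (hβ₁ : ∀ a b, β₁ a b = q (a + b) - q a - q b)
    (hβ : ∀ a b, β a b = (-1 : Fˣ) ^ (β₁ a b).val)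
    (hgen : AddSubgroup.closure {a | q a = 0} = ⊤) :
    IsSkewRootJordan β {a | q a = 0} := by
  refine ⟨hgen, fun a ha => by rwa [ZModModule.neg_eq_self], ?_⟩
  intro a (ha : q a = 0) b (hb : q b = 0) hab
  rw [hβ, neg_one_pow_val_ne_neg_one_iff hF] at hab
  show q (a + b) = 0
  rw [add_eq_add_add_polar hβ₁, ha, hb, hab, add_zero, add_zero]

theorem isSkewRootLie_setOf_ne_zero_and_eq_one (hF : (-1 : Fˣ) ≠ 1)
    (hβ₁ : ∀ a b, β₁ a b = q (a + b) - q a - q b) (hq₀ : q 0 = 0)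
    (hβ : ∀ a b, β a b = (-1 : Fˣ) ^ (β₁ a b).val)
    (hnondeg : ∀ g, (∀ h, β g h = 1) → g = 0)
    (hgen : AddSubgroup.closure {a | a ≠ 0 ∧ q a = 1} = ⊤) :
    IsSkewRootLie β {a | a ≠ 0 ∧ q a = 1} := by
  refine ⟨fun a ha => not_forall.mp (mt (hnondeg a) ha.1), hgen,
    fun a ha => by rwa [ZModModule.neg_eq_self], ?_⟩
  intro a ha b hb hab
  rw [hβ, neg_one_pow_val_ne_one_iff hF] at hab
  have hsum : q (a + b) = 1 := by
    rw [add_eq_add_add_polar hβ₁, ha.2, hb.2, hab]; decide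
  exact ⟨fun h => by simp [h, hq₀] at hsum, hsum⟩

end SkewRootSystems

theorem quadratic_form_skew_root_systems_general
    {F : Type*} [Field F] [CharZero F]
    (k : ℕ)
    (q : (Fin (2 * k) → ZMod 2) → ZMod 2)
    (β₁ : (Fin (2 * k) → ZMod 2) → (Fin (2 * k) → ZMod 2) → ZMod 2)
    (hβ₁ : ∀ a b, β₁ a b = q (a + b) - q a - q b)
    (hbil : (∀ a b c, β₁ (a + b) c = β₁ a c + β₁ b c) ∧
            (∀ a b c, β₁ a (b + c) = β₁ a b + β₁ a c))
    (β : (Fin (2 * k) → ZMod 2) → (Fin (2 * k) → ZMod 2) → Fˣ)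
    (hβ : ∀ a b, β a b = (-1 : Fˣ) ^ (β₁ a b).val) :
    (AddSubgroup.closure {a | q a = 0} = ⊤ →
      IsSkewRootJordan β {a | q a = 0}) ∧
    ((∀ g, (∀ h, β g h = 1) → g = 0) →
      AddSubgroup.closure {a | a ≠ 0 ∧ q a = 1} = ⊤ →
      IsSkewRootLie β {a | a ≠ 0 ∧ q a = 1}) := by
  have hF := Units.neg_one_ne_one_of_charZero F
  exact ⟨isSkewRootJordan_setOf_eq_zero hF hβ₁ hβ,
    isSkewRootLie_setOf_ne_zero_and_eq_one hF hβ₁ (map_zero_of_polar_add_left hβ₁ hbil.1) hβ⟩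

/-- Let `q : 𝔽₂^{2k} → 𝔽₂` be a quadratic form with polarization
`β₁(a,b) = q(a+b) - q(a) - q(b)` (a bilinear form), and `β(a,b) = (-1)^{β₁(a,b)}` valued
in `Fˣ`, where `G = ℤ₂^{2k}` is identified with `𝔽₂^{2k}`.
(1) If `R = {a : q a = 0}` generates `G`, then `R` is a skew root system of Jordan type
in `(G,β)`.
(2) If `β` is nonsingular and `R' = {a ≠ 0 : q a = 1}` generates `G`, then `R'` is a skew
root system of Lie type in `(G,β)`. -/
theorem quadratic_form_skew_root_systems
    {F : Type*} [Field F] [IsAlgClosed F] [CharZero F]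
    (k : ℕ)
    (q : (Fin (2 * k) → ZMod 2) → ZMod 2)
    (β₁ : (Fin (2 * k) → ZMod 2) → (Fin (2 * k) → ZMod 2) → ZMod 2)
    (hβ₁ : ∀ a b, β₁ a b = q (a + b) - q a - q b)
    (hbil : (∀ a b c, β₁ (a + b) c = β₁ a c + β₁ b c) ∧
            (∀ a b c, β₁ a (b + c) = β₁ a b + β₁ a c))
    (β : (Fin (2 * k) → ZMod 2) → (Fin (2 * k) → ZMod 2) → Fˣ)
    (hβ : ∀ a b, β a b = (-1 : Fˣ) ^ (β₁ a b).val) :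
    (AddSubgroup.closure {a | q a = 0} = ⊤ →
      IsSkewRootJordan β {a | q a = 0}) ∧
    ((∀ g, (∀ h, β g h = 1) → g = 0) →
      AddSubgroup.closure {a | a ≠ 0 ∧ q a = 1} = ⊤ →
      IsSkewRootLie β {a | a ≠ 0 ∧ q a = 1}) :=
  quadratic_form_skew_root_systems_general k q β₁ hβ₁ hbil β hβ
end
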